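/- Let Ĉ be a cyclic code of length n = p^k over R = F[u]/⟨u⁴⟩ with third torsional degree 𝔱, let 0 ≤ r_3 < n, and let C be the ideal of S generated by Ĉ together with g_3(x) = u³(x−1)^{r_3}. Then the third torsional degree t_3 of C satisfies: t_3 = 𝔱 if r_3 ≥ 𝔱, and t_3 = r_3 if r_3 < 𝔱; that is, t_3 = min{𝔱, r_3}. -/

import Mathlib

open Polynomial
open scoped Classical

noncomputable section

/-- The ring `R = F[u]/⟨u⁴⟩`. -/
abbrev Rq (F : Type) [Field F] : Type :=
  Polynomial F ⧸ Ideal.span ({X ^ 4} : Set (Polynomial F))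

instance instCommRingRq (F : Type) [Field F] : CommRing (Rq F) :=
  Ideal.Quotient.commRing _

/-- The ring `S = R[x]/⟨xⁿ − 1⟩`. -/
abbrev Sq (F : Type) [Field F] (n : ℕ) : Type :=
  Polynomial (Rq F) ⧸ Ideal.span ({X ^ n - 1} : Set (Polynomial (Rq F)))

/-- The ring `Q = F[x]/⟨xⁿ − 1⟩`. -/
abbrev Qq (F : Type) [Field F] (n : ℕ) : Type :=
  Polynomial F ⧸ Ideal.span ({X ^ n - 1} : Set (Polynomial F))

/-- The element `u` of `R`. -/
def uu (F : Type) [Field F] : Rq F := Ideal.Quotient.mk _ X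

/-- The element `u` of `S`. -/
def uS (F : Type) [Field F] (n : ℕ) : Sq F n := Ideal.Quotient.mk _ (C (uu F))

/-- The element `x` of `S`. -/
def xS (F : Type) [Field F] (n : ℕ) : Sq F n := Ideal.Quotient.mk _ X

/-- The element `x` of `Q`. -/
def xQ (F : Type) [Field F] (n : ℕ) : Qq F n := Ideal.Quotient.mk _ X

/-- Reduction `R → F` modulo `u`. -/
def resHom (F : Type) [Field F] : Rq F →+* F :=
  Ideal.Quotient.lift _ (evalRingHom 0) (by
    intro a ha
    rw [Ideal.mem_span_singleton] at ha
    obtain ⟨c, rfl⟩ := ha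
    simp)

/-- Reduction `μ : S → Q` modulo `u`. -/
def muHom (F : Type) [Field F] (n : ℕ) : Sq F n →+* Qq F n :=
  Ideal.Quotient.lift _ ((Ideal.Quotient.mk _).comp (mapRingHom (resHom F))) (by
    intro a ha
    rw [Ideal.mem_span_singleton] at ha
    obtain ⟨c, rfl⟩ := ha
    rw [RingHom.comp_apply, map_mul, Ideal.Quotient.eq_zero_iff_mem]
    apply Ideal.mul_mem_right
    have h : (mapRingHom (resHom F)) (X ^ n - 1 : Polynomial (Rq F))
        = (X ^ n - 1 : Polynomial F) := by simp
    rw [h]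
    exact Ideal.subset_span rfl)

/-- The natural lift `Q → S` (sending `a ∈ F` to itself and `x ↦ x`). -/
def liftQS (F : Type) [Field F] (n : ℕ) : Qq F n →+* Sq F n :=
  Ideal.Quotient.lift _
    ((Ideal.Quotient.mk _).comp
      (mapRingHom ((Ideal.Quotient.mk _).comp (C : F →+* Polynomial F)))) (by
    intro a ha
    rw [Ideal.mem_span_singleton] at ha
    obtain ⟨c, rfl⟩ := ha
    rw [RingHom.comp_apply, map_mul, Ideal.Quotient.eq_zero_iff_mem]
    apply Ideal.mul_mem_right
    have h : (mapRingHom ((Ideal.Quotient.mk (Ideal.span ({X ^ 4} : Set (Polynomial F)))).comp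
        (C : F →+* Polynomial F))) (X ^ n - 1 : Polynomial F)
        = (X ^ n - 1 : Polynomial (Rq F)) := by simp
    rw [h]
    exact Ideal.subset_span rfl)

/-- The `i`-th torsion code `Tor_i(C) = {μ(g) : uⁱ·g ∈ C}`, as a subset of `Q`. -/
def TorSet (F : Type) [Field F] (n : ℕ) (i : ℕ) (Cc : Ideal (Sq F n)) : Set (Qq F n) :=
  { a | ∃ g : Sq F n, (uS F n) ^ i * g ∈ Cc ∧ muHom F n g = a }

/-- The code `C` has `i`-th torsional degree `t`, i.e. `Tor_i(C) = ⟨(x−1)^t⟩` with `0 ≤ t ≤ n`. -/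
def HasTorDeg (F : Type) [Field F] (n : ℕ) (i : ℕ) (Cc : Ideal (Sq F n)) (t : ℕ) : Prop :=
  t ≤ n ∧ TorSet F n i Cc = ↑(Ideal.span {(xQ F n - 1) ^ t})

/-- An element of `S` that is the lift of a unit of `Q = F[x]/⟨xⁿ−1⟩`. -/
def IsUnitLift (F : Type) [Field F] (n : ℕ) (a : Sq F n) : Prop :=
  ∃ q : Qq F n, IsUnit q ∧ a = liftQS F n q

/-- An element of `S` that is zero or the lift of a unit of `Q = F[x]/⟨xⁿ−1⟩`. -/
def UnitOrZeroLift (F : Type) [Field F] (n : ℕ) (a : Sq F n) : Prop :=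
  a = 0 ∨ IsUnitLift F n a

/-!
Adjoining a generator `uⁱ f` to a code adds exactly `⟨μ f⟩` to its `i`-th torsion code: if
`uⁱ g = c + s uⁱ f` with `c` in the code, then `uⁱ (g - s f)` lies in the code, so
`μ g ∈ Torᵢ + ⟨μ f⟩`. For `f = (x - 1)^r` the torsion code becomes
`⟨(x - 1)^t⟩ + ⟨(x - 1)^r⟩ = ⟨(x - 1)^(min t r)⟩`.
-/

theorem Ideal.span_singleton_pow_sup_span_singleton_pow {R : Type*} [CommSemiring R] (a : R)
    (s t : ℕ) : Ideal.span {a ^ s} ⊔ Ideal.span {a ^ t} = Ideal.span {a ^ min s t} := by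
  rcases le_total s t with hst | hts
  · rw [min_eq_left hst, sup_eq_left, Ideal.span_singleton_le_span_singleton]
    exact pow_dvd_pow a hst
  · rw [min_eq_right hts, sup_eq_right, Ideal.span_singleton_le_span_singleton]
    exact pow_dvd_pow a hts

section Torsion

variable {F : Type} [Field F] {n : ℕ}

theorem muHom_liftQS (q : Qq F n) : muHom F n (liftQS F n q) = q := by
  obtain ⟨f, rfl⟩ := Ideal.Quotient.mk_surjective q
  have hid : (resHom F).comp ((Ideal.Quotient.mk
      (Ideal.span ({X ^ 4} : Set (Polynomial F)))).comp (C : F →+* Polynomial F))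
      = RingHom.id F := by
    ext a
    simp [resHom]
  simp only [liftQS, muHom, Ideal.Quotient.lift_mk, RingHom.comp_apply, coe_mapRingHom,
    Polynomial.map_map, hid, Polynomial.map_id]

theorem muHom_xS : muHom F n (xS F n) = xQ F n := by
  simp [muHom, xS, xQ]

theorem TorSet_sup_span_singleton {i : ℕ} {I : Ideal (Sq F n)} {J : Ideal (Qq F n)}
    (hI : TorSet F n i I = J) (f : Sq F n) :
    TorSet F n i (I ⊔ Ideal.span {uS F n ^ i * f}) = ↑(J ⊔ Ideal.span {muHom F n f}) := by
  ext a
  constructor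
  · rintro ⟨g, hg, rfl⟩
    obtain ⟨c, hc, b, hb, hcb⟩ := Submodule.mem_sup.mp hg
    obtain ⟨s, rfl⟩ := Ideal.mem_span_singleton'.mp hb
    have hgs : uS F n ^ i * (g - s * f) ∈ I := by
      convert hc using 1
      linear_combination -hcb
    have hJ : muHom F n (g - s * f) ∈ J := by
      rw [← SetLike.mem_coe, ← hI]
      exact ⟨_, hgs, rfl⟩
    have hsplit : muHom F n g = muHom F n (g - s * f) + muHom F n s * muHom F n f := by
      rw [map_sub, map_mul]
      ring
    rw [SetLike.mem_coe, hsplit]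
    exact Submodule.add_mem_sup hJ (Ideal.mul_mem_left _ _ (Ideal.mem_span_singleton_self _))
  · intro ha
    obtain ⟨j, hj, b, hb, rfl⟩ := Submodule.mem_sup.mp ha
    obtain ⟨q, rfl⟩ := Ideal.mem_span_singleton'.mp hb
    obtain ⟨g, hg, rfl⟩ : j ∈ TorSet F n i I := hI ▸ hj
    refine ⟨g + liftQS F n q * f, ?_, by rw [map_add, map_mul, muHom_liftQS]⟩
    rw [mul_add, mul_left_comm (uS F n ^ i)]
    exact Ideal.add_mem _ (Ideal.mem_sup_left hg)
      (Ideal.mem_sup_right (Ideal.mul_mem_left _ _ (Ideal.mem_span_singleton_self _)))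

theorem HasTorDeg.sup_span_singleton {i : ℕ} {I : Ideal (Sq F n)} {t : ℕ}
    (hI : HasTorDeg F n i I t) (r : ℕ) :
    HasTorDeg F n i (I ⊔ Ideal.span {uS F n ^ i * (xS F n - 1) ^ r}) (min t r) := by
  refine ⟨(min_le_left t r).trans hI.1, ?_⟩
  rw [TorSet_sup_span_singleton hI.2, map_pow, map_sub, map_one, muHom_xS,
    Ideal.span_singleton_pow_sup_span_singleton_pow]

end Torsion

theorem stmt_15_general (p k : ℕ)
    (F : Type) [Field F]
    (Chat : Ideal (Sq F (p ^ k))) (t : ℕ) (hChat : HasTorDeg F (p ^ k) 3 Chat t)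
    (r₃ : ℕ)
    (C : Ideal (Sq F (p ^ k)))
    (hC : C = Chat ⊔ Ideal.span { uS F (p ^ k) ^ 3 * (xS F (p ^ k) - 1) ^ r₃ }) :
    (t ≤ r₃ → HasTorDeg F (p ^ k) 3 C t) ∧
    (r₃ < t → HasTorDeg F (p ^ k) 3 C r₃) := by
  have hmin := hC ▸ hChat.sup_span_singleton r₃
  exact ⟨fun h => min_eq_left h ▸ hmin, fun h => min_eq_right h.le ▸ hmin⟩

/-- adjoining `u³(x−1)^{r₃}` to a code with third torsional degree `𝔱`
produces a code with third torsional degree `𝔱` if `r₃ ≥ 𝔱`, and `r₃` if `r₃ < 𝔱`. -/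
theorem stmt_15 (p m k : ℕ) (hp : Nat.Prime p) (hm : 1 ≤ m) (hk : 1 ≤ k)
    (F : Type) [Field F] [Fintype F] (hF : Fintype.card F = p ^ m)
    (Chat : Ideal (Sq F (p ^ k))) (t : ℕ) (hChat : HasTorDeg F (p ^ k) 3 Chat t)
    (r₃ : ℕ) (hr₃ : r₃ < p ^ k)
    (C : Ideal (Sq F (p ^ k)))
    (hC : C = Chat ⊔ Ideal.span { uS F (p ^ k) ^ 3 * (xS F (p ^ k) - 1) ^ r₃ }) :
    (t ≤ r₃ → HasTorDeg F (p ^ k) 3 C t) ∧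
    (r₃ < t → HasTorDeg F (p ^ k) 3 C r₃) :=
  stmt_15_general p k F Chat t hChat r₃ C hC

end
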